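/- Let H be a power series map with JH strongly nilpotent with index p, and let T be a labelled typed proper rooted tree of height ≥ p with spine (v_0,…,v_p) as above. Then the sum of energies over the equivalence class [T] of T (trees agreeing with T except for the types of v_1,…,v_{p−1}) vanishes: Σ_{T' ∈ [T]} E_H(T') = 0. -/

import Mathlib

noncomputable section
/-- `1/β!` as an element of the field `k`. -/
def invFact {k : Type*} [Field k] {n : ℕ} (β : Fin n →₀ ℕ) : k :=
  (β.prod fun _ m => (m.factorial : k))⁻¹

/-- Embed a multi-index in the variables `X_1,…,X_n` into the `ℓ`-th block of the `n·p`
variables `X⁽ℓ⁾_m`. -/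
def emb {n p : ℕ} (ℓ : Fin p) (β : Fin n →₀ ℕ) : (Fin p × Fin n) →₀ ℕ :=
  Finsupp.mapDomain (fun m => (ℓ, m)) β

/-- Restrict a multi-index on the `n·p` variables to its `ℓ`-th block. -/
def blockRestrict {n p : ℕ} (γ : (Fin p × Fin n) →₀ ℕ) (ℓ : Fin p) : Fin n →₀ ℕ :=
  Finsupp.comapDomain (fun m => (ℓ, m)) γ (fun _ _ _ _ h => congrArg Prod.snd h)

/-- The `(i,j)` entry of the Jacobian matrix `JH(X⁽ℓ⁾)` of the power series map `H` with
coefficients `H_i = Σ_α (Hc i α / α!) X^α`, evaluated at the `ℓ`-th block of variables: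
`(JH)_{i,j}(X⁽ℓ⁾) = Σ_α (Hc i (α+e_j) / α!) (X⁽ℓ⁾)^α`, as a power series in the `n·p`
variables `X⁽ℓ⁾_m`. -/
def jacBlock {k : Type*} [Field k] {n p : ℕ} (Hc : Fin n → (Fin n →₀ ℕ) → k)
    (ℓ : Fin p) (i j : Fin n) : MvPowerSeries (Fin p × Fin n) k :=
  fun γ => if ∀ q ∈ γ.support, q.1 = ℓ then
    Hc i (blockRestrict γ ℓ + Finsupp.single j 1) * invFact (blockRestrict γ ℓ)
  else 0

/-- The label set `[α] = {(j,k) : 1 ≤ k ≤ α_j}` of leaf labels for the multi-index `α`. -/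
abbrev Lbl (n : ℕ) (α : Fin n →₀ ℕ) : Type := (j : Fin n) × Fin (α j)

/-- A proper rooted tree with leaves labelled bijectively by `Lbl n α` is encoded by the
laminar family of the leaf-label sets of the subtrees of its vertices: the family contains
the full set (the root) and all singletons (the leaves), does not contain `∅`, and any two
members are nested or disjoint.  The vertices of the tree are the members of the family,
the leaves being the singletons; since every internal vertex of a proper tree has at least
two children, this correspondence is a bijection onto isomorphism classes. -/
def Laminar {n : ℕ} {α : Fin n →₀ ℕ} (F : Finset (Finset (Lbl n α))) : Prop :=
  Finset.univ ∈ F ∧ (∀ x : Lbl n α, {x} ∈ F) ∧ (∅ : Finset (Lbl n α)) ∉ F ∧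
    ∀ S ∈ F, ∀ T ∈ F, S ⊆ T ∨ T ⊆ S ∨ Disjoint S T

/-- The depth (generation) of the vertex `S`: the number of strict ancestors of `S`. -/
def depthT {n : ℕ} {α : Fin n →₀ ℕ} (F : Finset (Finset (Lbl n α)))
    (S : Finset (Lbl n α)) : ℕ :=
  (F.filter fun T => S ⊂ T).card

/-- The height of the tree: the maximal depth of a vertex. -/
def heightT {n : ℕ} {α : Fin n →₀ ℕ} (F : Finset (Finset (Lbl n α))) : ℕ :=
  F.sup (depthT F)

/-- The children of the vertex `S`: the maximal members of `F` strictly below `S`. -/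
def childrenT {n : ℕ} {α : Fin n →₀ ℕ} (F : Finset (Finset (Lbl n α)))
    (S : Finset (Lbl n α)) : Finset (Finset (Lbl n α)) :=
  F.filter fun C => C ⊂ S ∧ ¬∃ T ∈ F, C ⊂ T ∧ T ⊂ S

/-- The outdegree `μ(S)` of the vertex `S` with respect to the typing `τ`: the multi-index
counting the children of `S` by type. -/
noncomputable def outdeg {n : ℕ} {α : Fin n →₀ ℕ} (F : Finset (Finset (Lbl n α)))
    (τ : Finset (Lbl n α) → Fin n) (S : Finset (Lbl n α)) : Fin n →₀ ℕ :=
  ∑ C ∈ childrenT F S, Finsupp.single (τ C) 1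

/-- The energy `E_H(T) = ∏_{S internal} H_{τ(S), μ(S)}` of a typed labelled tree;
the internal vertices are the non-singleton members of `F`. -/
noncomputable def energy {k : Type*} [Field k] {n : ℕ} {α : Fin n →₀ ℕ}
    (Hc : Fin n → (Fin n →₀ ℕ) → k) (F : Finset (Finset (Lbl n α)))
    (τ : Finset (Lbl n α) → Fin n) : k :=
  ∏ S ∈ F.filter (fun S => 1 < S.card), Hc (τ S) (outdeg F τ S)

/-- The data of a typed labelled tree: a family of subsets of the label set, together with a
typing function (normalized to the value `i` off the family, so that each isomorphism class
of tree is encoded exactly once). -/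
abbrev TreeData (n : ℕ) (α : Fin n →₀ ℕ) : Type :=
  Finset (Finset (Lbl n α)) × (Finset (Lbl n α) → Fin n)

/-- The tree data `T` encodes an element of `𝕊_{i,α}`: the family is laminar, the root
(the full set) has type `i`, each leaf (singleton) `{(j,k)}` has type `j`, and the typing is
normalized to `i` off the family. -/
def Good {n : ℕ} {α : Fin n →₀ ℕ} (i : Fin n) (T : TreeData n α) : Prop :=
  Laminar T.1 ∧ T.2 Finset.univ = i ∧ (∀ x : Lbl n α, T.2 {x} = x.1) ∧
    ∀ S ∉ T.1, T.2 S = i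
/-- The lexicographic linear order on the label set `[α]`. -/
noncomputable instance {n : ℕ} {α : Fin n →₀ ℕ} : LinearOrder (Lbl n α) :=
  LinearOrder.lift' (fun x => toLex ((x.1 : ℕ), (x.2 : ℕ))) (by
    rintro ⟨a, b⟩ ⟨c, d⟩ h
    have h' : ((a : ℕ), (b : ℕ)) = ((c : ℕ), (d : ℕ)) := h
    have h1 : (a : ℕ) = (c : ℕ) := congrArg Prod.fst h'
    have h2 : (b : ℕ) = (d : ℕ) := congrArg Prod.snd h'
    have hac : a = c := Fin.val_injective h1
    subst hac
    have hbd : b = d := Fin.val_injective h2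
    subst hbd
    rfl)

/-- The leaves of `F` lying in generation `p` or higher. -/
noncomputable def deepLeaves {n : ℕ} {α : Fin n →₀ ℕ} (p : ℕ)
    (F : Finset (Finset (Lbl n α))) : Finset (Lbl n α) :=
  Finset.univ.filter fun x => p ≤ depthT F {x}

open scoped Classical in
/-- The middle spine vertices `v₁, …, v_{p-1}` of a tree of height `≥ p`: writing `x*` for the
lexicographically greatest leaf at depth `≥ p` and `D` for its depth, these are the ancestors
of `x*` of depths `D - p + 1, …, D - 1`. -/
noncomputable def spineMid {n : ℕ} {α : Fin n →₀ ℕ} (p : ℕ)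
    (F : Finset (Finset (Lbl n α))) : Finset (Finset (Lbl n α)) :=
  if h : (deepLeaves p F).Nonempty then
    F.filter fun S => (deepLeaves p F).max' h ∈ S ∧
      depthT F {(deepLeaves p F).max' h} - p + 1 ≤ depthT F S ∧
      depthT F S ≤ depthT F {(deepLeaves p F).max' h} - 1
  else ∅

/-- Two trees are related iff they are identical except possibly for the types of the middle
spine vertices `v₁, …, v_{p-1}`. -/
def SpineRel {n : ℕ} {α : Fin n →₀ ℕ} (p : ℕ) (T T' : TreeData n α) : Prop :=
  T.1 = T'.1 ∧ ∀ S ∉ spineMid p T.1, T.2 S = T'.2 S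

/-- The coefficient `H_{i,β}`, i.e. `β!` times the coefficient of `X^β` in the power series
`H_i`, so that `H_i = Σ_β (H_{i,β}/β!) X^β`. -/
def coefSc {k : Type*} [Field k] {n : ℕ} (H : Fin n → MvPowerSeries (Fin n) k)
    (i : Fin n) (β : Fin n →₀ ℕ) : k :=
  (β.prod fun _ m => (m.factorial : k)) * MvPowerSeries.coeff β (H i)


/-!
Let `v₀, …, v_p` be the spine. Retyping `v₁, …, v_{p-1}` changes only the energy factors of
`v₀, …, v_{p-1}`, and the factor of `vₗ` is the `(τ vₗ, τ vₗ₊₁)` entry of `β!` times the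
coefficient of `X^β` in `JH`, where `β = βₗ` counts the other children of `vₗ` by type. Summing
over all retypings therefore yields the `(τ v₀, τ v_p)` entry of a product of `p` such matrices,
which up to the nonzero factor `∏ 1/βₗ!` is the coefficient of `∏ₗ (X⁽ℓ⁾)^{βₗ}` in
`JH(X⁽¹⁾) ⋯ JH(X⁽ᵖ⁾) = 0`.
-/

namespace MvPowerSeries

variable {σ R : Type*} [CommSemiring R]

def SupportedIn (s : Set σ) (f : MvPowerSeries σ R) : Prop :=
  ∀ δ : σ →₀ ℕ, coeff δ f ≠ 0 → ↑δ.support ⊆ s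

variable {s t : Set σ} {f g : MvPowerSeries σ R}

theorem supportedIn_one : SupportedIn s (1 : MvPowerSeries σ R) := by
  classical
  intro δ hδ
  rw [coeff_one] at hδ
  split_ifs at hδ with h
  · simp [h]
  · exact absurd rfl hδ

theorem SupportedIn.mono (hf : SupportedIn s f) (hst : s ⊆ t) : SupportedIn t f :=
  fun δ hδ => (hf δ hδ).trans hst

theorem SupportedIn.mul (hf : SupportedIn s f) (hg : SupportedIn t g) :
    SupportedIn (s ∪ t) (f * g) := by
  classical
  intro δ hδ
  rw [coeff_mul] at hδ
  obtain ⟨⟨u, v⟩, huv, hne⟩ := Finset.exists_ne_zero_of_sum_ne_zero hδ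
  rw [← Finset.HasAntidiagonal.mem_antidiagonal.1 huv]
  refine (Finset.coe_subset.2 Finsupp.support_add).trans ?_
  rw [Finset.coe_union]
  exact Set.union_subset_union (hf u (left_ne_zero_of_mul hne))
    (hg v (right_ne_zero_of_mul hne))

theorem supportedIn_sum {ι : Type*} (I : Finset ι) {F : ι → MvPowerSeries σ R}
    (hF : ∀ i ∈ I, SupportedIn s (F i)) : SupportedIn s (∑ i ∈ I, F i) := by
  intro δ hδ
  rw [map_sum] at hδ
  obtain ⟨i, hi, hne⟩ := Finset.exists_ne_zero_of_sum_ne_zero hδ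
  exact hF i hi δ hne

/-- Only the splitting `(u, v)` of `u + v` respects the partition `s ∪ sᶜ`. -/
theorem coeff_add_mul_of_supportedIn (hf : SupportedIn s f) (hg : SupportedIn sᶜ g)
    {u v : σ →₀ ℕ} (hu : ↑u.support ⊆ s) (hv : ↑v.support ⊆ sᶜ) :
    coeff (u + v) (f * g) = coeff u f * coeff v g := by
  classical
  rw [coeff_mul,
    Finset.sum_eq_single_of_mem (u, v) (Finset.HasAntidiagonal.mem_antidiagonal.2 rfl)]
  rintro ⟨u', v'⟩ huv hne
  by_contra hterm
  have hu' := hf u' (left_ne_zero_of_mul hterm)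
  have hv' := hg v' (right_ne_zero_of_mul hterm)
  have hsum : u' + v' = u + v := Finset.HasAntidiagonal.mem_antidiagonal.1 huv
  have key : ∀ x, u' x = u x ∧ v' x = v x := by
    intro x
    have hx := DFunLike.congr_fun hsum x
    simp only [Finsupp.add_apply] at hx
    by_cases hxs : x ∈ s
    · have h1 : v' x = 0 := Finsupp.notMem_support_iff.1 fun h => hv' h hxs
      have h2 : v x = 0 := Finsupp.notMem_support_iff.1 fun h => hv h hxs
      omega
    · have h1 : u' x = 0 := Finsupp.notMem_support_iff.1 fun h => hxs (hu' h)
      have h2 : u x = 0 := Finsupp.notMem_support_iff.1 fun h => hxs (hu h)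
      omega
  exact hne (Prod.ext (Finsupp.ext fun x => (key x).1) (Finsupp.ext fun x => (key x).2))

end MvPowerSeries

namespace Matrix
open MvPowerSeries

variable {σ ι m R : Type*} [CommSemiring R] [Fintype m] [DecidableEq m] {b : σ → ι}
  {M : ι → Matrix m m (MvPowerSeries σ R)}

theorem supportedIn_list_prod_apply (hM : ∀ ℓ a c, SupportedIn (b ⁻¹' {ℓ}) (M ℓ a c))
    (l : List ι) (i j : m) : SupportedIn (b ⁻¹' {ℓ | ℓ ∈ l}) ((l.map M).prod i j) := by
  induction l generalizing i with
  | nil =>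
    rw [List.map_nil, List.prod_nil, one_apply]
    split_ifs
    · exact supportedIn_one
    · intro δ hδ
      simp at hδ
  | cons a l ih =>
    rw [List.map_cons, List.prod_cons, mul_apply]
    refine supportedIn_sum _ fun c _ => ((hM a i c).mul (ih c)).mono ?_
    rintro x (hx | hx) <;> simp_all

theorem coe_support_list_sum_map_subset {u : ι → σ →₀ ℕ}
    (hu : ∀ ℓ, ↑(u ℓ).support ⊆ b ⁻¹' {ℓ}) (l : List ι) :
    ↑(l.map u).sum.support ⊆ b ⁻¹' {ℓ | ℓ ∈ l} := by
  classical
  induction l with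
  | nil => simp
  | cons a l ih =>
    rw [List.map_cons, List.sum_cons]
    refine (Finset.coe_subset.2 Finsupp.support_add).trans ?_
    rw [Finset.coe_union]
    rintro x (hx | hx)
    · simpa using Or.inl (hu a hx)
    · simpa using Or.inr (ih hx)

theorem coeff_list_prod_apply (hM : ∀ ℓ a c, SupportedIn (b ⁻¹' {ℓ}) (M ℓ a c))
    {u : ι → σ →₀ ℕ} (hu : ∀ ℓ, ↑(u ℓ).support ⊆ b ⁻¹' {ℓ}) {l : List ι} (hl : l.Nodup)
    (i j : m) :
    coeff (l.map u).sum ((l.map M).prod i j)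
      = (l.map fun ℓ => (M ℓ).map (coeff (u ℓ))).prod i j := by
  induction l generalizing i with
  | nil =>
    classical
    simp only [List.map_nil, List.sum_nil, List.prod_nil, one_apply]
    split_ifs <;> simp
  | cons a l ih =>
    obtain ⟨ha, hl⟩ := List.nodup_cons.1 hl
    have hdisj : b ⁻¹' {ℓ | ℓ ∈ l} ⊆ (b ⁻¹' {a})ᶜ := fun x hx hxa => ha (hxa ▸ hx)
    simp only [List.map_cons, List.sum_cons, List.prod_cons, mul_apply, map_sum]
    refine Finset.sum_congr rfl fun c _ => ?_
    rw [coeff_add_mul_of_supportedIn (hM a i c)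
      ((supportedIn_list_prod_apply hM l c j).mono hdisj) (hu a)
      ((coe_support_list_sum_map_subset hu l).trans hdisj), ih hl, map_apply]

theorem list_prod_ofFn_apply {q : ℕ} (W : Fin (q + 1) → Matrix m m R) (i j : m) :
    (List.ofFn W).prod i j = ∑ g : Fin q → m, ∏ ℓ : Fin (q + 1),
      W ℓ ((Fin.cons i (Fin.snoc g j) : Fin (q + 2) → m) ℓ.castSucc)
        ((Fin.cons i (Fin.snoc g j) : Fin (q + 2) → m) ℓ.succ) := by
  induction q generalizing i with
  | zero => simp [Fin.snoc]
  | succ q ih =>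
    rw [List.ofFn_succ, List.prod_cons, mul_apply,
      ← (Fin.consEquiv fun _ => m).sum_comp, Fintype.sum_prod_type]
    refine Finset.sum_congr rfl fun s _ => ?_
    rw [ih, Finset.mul_sum]
    refine Finset.sum_congr rfl fun g _ => ?_
    rw [Fin.prod_univ_succ (n := q + 1)]
    simp [Fin.consEquiv, ← Fin.cons_snoc_eq_snoc_cons]

end Matrix

theorem List.prod_map_smul {R ι A : Type*} [CommSemiring R] [Semiring A] [Algebra R A]
    (c : ι → R) (M : ι → A) (l : List ι) :
    (l.map fun ℓ => c ℓ • M ℓ).prod = (l.map c).prod • (l.map M).prod := by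
  induction l with
  | nil => simp
  | cons a l ih => simp only [List.map_cons, List.prod_cons, ih, smul_mul_smul_comm]

section JacobianCoefficients
open MvPowerSeries

variable {k : Type*} [Field k] {n p : ℕ}

/-- `β!` times the coefficient of `X^β` in the Jacobian matrix `JH`. -/
def jacCoeff {R : Type*} (Hc : Fin n → (Fin n →₀ ℕ) → R) (β : Fin n →₀ ℕ) :
    Matrix (Fin n) (Fin n) R :=
  Matrix.of fun a b => Hc a (β + Finsupp.single b 1)

theorem invFact_ne_zero [CharZero k] (β : Fin n →₀ ℕ) : (invFact β : k) ≠ 0 :=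
  inv_ne_zero <| Finset.prod_ne_zero_iff.2 fun _ _ =>
    Nat.cast_ne_zero.2 (Nat.factorial_ne_zero _)

theorem coe_support_emb_subset (ℓ : Fin p) (β : Fin n →₀ ℕ) :
    ((emb ℓ β).support : Set (Fin p × Fin n)) ⊆ Prod.fst ⁻¹' {ℓ} := by
  intro x hx
  obtain ⟨m, -, rfl⟩ := Finset.mem_image.1 (Finsupp.mapDomain_support hx)
  rfl

theorem blockRestrict_emb (ℓ : Fin p) (β : Fin n →₀ ℕ) : blockRestrict (emb ℓ β) ℓ = β :=
  Finsupp.ext fun m => Finsupp.mapDomain_apply (fun _ _ h => congrArg Prod.snd h) β m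

theorem supportedIn_jacBlock (Hc : Fin n → (Fin n →₀ ℕ) → k) (ℓ : Fin p) (i j : Fin n) :
    SupportedIn (Prod.fst ⁻¹' {ℓ}) (jacBlock Hc ℓ i j) := fun γ hγ x hx => by
  by_contra h
  exact hγ (if_neg fun hγℓ => h (hγℓ x hx))

theorem map_coeff_emb_jacBlock (Hc : Fin n → (Fin n →₀ ℕ) → k) (ℓ : Fin p)
    (β : Fin n →₀ ℕ) :
    (Matrix.of (jacBlock Hc ℓ)).map (coeff (emb ℓ β)) = (invFact β : k) • jacCoeff Hc β := by
  ext i j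
  rw [Matrix.map_apply, Matrix.of_apply, Matrix.smul_apply, smul_eq_mul, jacCoeff,
    Matrix.of_apply]
  change ite _ _ _ = _
  have hblock : ∀ x ∈ (emb ℓ β).support, x.1 = ℓ := fun x hx => coe_support_emb_subset ℓ β hx
  rw [if_pos hblock, blockRestrict_emb, mul_comm]

/-- Compare the coefficients of `∏ ℓ (X⁽ℓ⁾)^{β ℓ}` in `JH(X⁽⁰⁾) ⋯ JH(X⁽ᵖ⁻¹⁾) = 0`; the factors
`1/(β ℓ)!` are nonzero in characteristic zero. -/
theorem list_prod_jacCoeff_eq_zero [CharZero k] {Hc : Fin n → (Fin n →₀ ℕ) → k}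
    (hstrong : (List.ofFn fun ℓ : Fin p => Matrix.of (jacBlock Hc ℓ)).prod = 0)
    (β : Fin p → Fin n →₀ ℕ) : (List.ofFn fun ℓ => jacCoeff Hc (β ℓ)).prod = 0 := by
  have hcoeff : ((List.finRange p).map fun ℓ => (invFact (β ℓ) : k)).prod •
      (List.ofFn fun ℓ => jacCoeff Hc (β ℓ)).prod = 0 := by
    ext i j
    have h := Matrix.coeff_list_prod_apply (M := fun ℓ => Matrix.of (jacBlock Hc ℓ))
      (fun ℓ => supportedIn_jacBlock Hc ℓ)
      (fun ℓ => coe_support_emb_subset ℓ (β ℓ)) (List.nodup_finRange p) i j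
    rw [List.ofFn_eq_map] at hstrong ⊢
    simp only [hstrong, Matrix.zero_apply, map_zero, map_coeff_emb_jacBlock,
      List.prod_map_smul] at h
    exact h.symm
  refine (smul_eq_zero.1 hcoeff).resolve_left (List.prod_ne_zero fun h0 => ?_)
  obtain ⟨ℓ, -, hℓ⟩ := List.mem_map.1 h0
  exact invFact_ne_zero (β ℓ) hℓ

end JacobianCoefficients

section Trees

variable {n : ℕ} {α : Fin n →₀ ℕ} {F : Finset (Finset (Lbl n α))} {S S' : Finset (Lbl n α)}

theorem depthT_le_of_subset (h : S ⊆ S') : depthT F S' ≤ depthT F S :=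
  Finset.card_le_card <| Finset.monotone_filter_right _ fun _ _ hU => lt_of_le_of_lt h hU

theorem depthT_lt_of_ssubset (hS' : S' ∈ F) (h : S ⊂ S') : depthT F S' < depthT F S := by
  refine Finset.card_lt_card ⟨Finset.monotone_filter_right _ fun _ _ hU => h.trans hU, ?_⟩
  intro hsub
  exact (Finset.mem_filter.1 (hsub (Finset.mem_filter.2 ⟨hS', h⟩))).2.false

namespace Laminar

theorem nonempty_of_mem (hF : Laminar F) (hS : S ∈ F) : S.Nonempty :=
  Finset.nonempty_iff_ne_empty.2 fun h => hF.2.2.1 (h ▸ hS)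

theorem subset_or_subset (hF : Laminar F) (hS : S ∈ F) (hS' : S' ∈ F) {x : Lbl n α}
    (hx : x ∈ S) (hx' : x ∈ S') : S ⊆ S' ∨ S' ⊆ S := by
  rcases hF.2.2.2 S hS S' hS' with h | h | h
  · exact Or.inl h
  · exact Or.inr h
  · exact absurd hx' (Finset.disjoint_left.1 h hx)

theorem eq_of_mem_childrenT (hF : Laminar F) (hS : S ∈ F) (hS' : S' ∈ F)
    {C : Finset (Lbl n α)} (hC : C ∈ childrenT F S) (hC' : C ∈ childrenT F S') : S = S' := by
  obtain ⟨hCF, hCS, hmax⟩ := Finset.mem_filter.1 hC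
  obtain ⟨-, hCS', hmax'⟩ := Finset.mem_filter.1 hC'
  obtain ⟨x, hx⟩ := hF.nonempty_of_mem hCF
  by_contra hne
  rcases hF.subset_or_subset hS hS' (hCS.subset hx) (hCS'.subset hx) with h | h
  · exact hmax' ⟨S, hS, hCS, h.ssubset_of_ne hne⟩
  · exact hmax ⟨S', hS', hCS', h.ssubset_of_ne (Ne.symm hne)⟩

theorem eq_of_depthT_eq (hF : Laminar F) (hS : S ∈ F) (hS' : S' ∈ F) {x : Lbl n α}
    (hx : x ∈ S) (hx' : x ∈ S') (h : depthT F S = depthT F S') : S = S' := by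
  by_contra hne
  rcases hF.subset_or_subset hS hS' hx hx' with hsub | hsub
  · exact (depthT_lt_of_ssubset hS' (hsub.ssubset_of_ne hne)).ne' h
  · exact (depthT_lt_of_ssubset hS (hsub.ssubset_of_ne (Ne.symm hne))).ne h

theorem mem_childrenT_of_depthT_eq_succ (hF : Laminar F) (hS : S ∈ F) (hS' : S' ∈ F)
    {x : Lbl n α} (hx : x ∈ S) (hx' : x ∈ S') (h : depthT F S' = depthT F S + 1) :
    S' ∈ childrenT F S := by
  have hsub : S' ⊂ S := by
    rcases hF.subset_or_subset hS hS' hx hx' with hsub | hsub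
    · have := depthT_le_of_subset (F := F) hsub
      omega
    · exact hsub.ssubset_of_ne fun he => by rw [he] at h; omega
  refine Finset.mem_filter.2 ⟨hS', hsub, ?_⟩
  rintro ⟨U, hU, h1, h2⟩
  have := depthT_lt_of_ssubset hU h1
  have := depthT_lt_of_ssubset hS h2
  omega

/-- The `depthT F S + 1` ancestors of `S` (counting `S`) form a chain on which the depth is
injective, so every depth `≤ depthT F S` is attained. -/
theorem exists_superset_depthT_eq (hF : Laminar F) (hS : S ∈ F) {j : ℕ}
    (hj : j ≤ depthT F S) : ∃ U ∈ F, S ⊆ U ∧ depthT F U = j := by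
  classical
  obtain ⟨x, hx⟩ := hF.nonempty_of_mem hS
  set anc := F.filter (S ⊆ ·)
  have hanc : anc = insert S (F.filter (S ⊂ ·)) := by
    ext U
    simp only [anc, Finset.mem_filter, Finset.mem_insert]
    constructor
    · rintro ⟨hU, hSU⟩
      exact (eq_or_ne S U).imp Eq.symm fun hne => ⟨hU, hSU.ssubset_of_ne hne⟩
    · rintro (rfl | ⟨hU, hSU⟩)
      exacts [⟨hS, subset_rfl⟩, ⟨hU, hSU.subset⟩]
  have hcard : anc.card = depthT F S + 1 := by
    rw [hanc, Finset.card_insert_of_notMem fun h => (Finset.mem_filter.1 h).2.false]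
    rfl
  have hsurj := Finset.surjOn_of_injOn_of_card_le (s := anc)
    (t := Finset.range (depthT F S + 1)) (depthT F)
    (fun U hU => Finset.mem_range.2 (Nat.lt_succ_of_le
      (depthT_le_of_subset (Finset.mem_filter.1 hU).2)))
    (fun U hU U' hU' => hF.eq_of_depthT_eq (Finset.mem_filter.1 hU).1
      (Finset.mem_filter.1 hU').1 ((Finset.mem_filter.1 hU).2 hx)
      ((Finset.mem_filter.1 hU').2 hx))
    (by rw [Finset.card_range, hcard])
  obtain ⟨U, hU, rfl⟩ := hsurj (Finset.mem_range.2 (Nat.lt_succ_of_le hj))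
  exact ⟨U, (Finset.mem_filter.1 hU).1, (Finset.mem_filter.1 hU).2, rfl⟩

theorem exists_spine {q : ℕ} (hF : Laminar F) (htall : q + 1 ≤ heightT F) :
    ∃ v : Fin (q + 2) → Finset (Lbl n α), Function.Injective v ∧ (∀ m, v m ∈ F) ∧
      (∀ ℓ : Fin (q + 1), v ℓ.succ ∈ childrenT F (v ℓ.castSucc)) ∧
      ∀ S, S ∈ spineMid (q + 1) F ↔ S ∈ Set.range fun r : Fin q => v r.castSucc.succ := by
  classical
  have hne : (deepLeaves (q + 1) F).Nonempty := by
    obtain ⟨S, hSF, hSd⟩ := (Finset.le_sup_iff (Nat.succ_pos q)).1 htall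
    obtain ⟨x, hx⟩ := hF.nonempty_of_mem hSF
    exact ⟨x, Finset.mem_filter.2 ⟨Finset.mem_univ x,
      hSd.trans (depthT_le_of_subset (Finset.singleton_subset_iff.2 hx))⟩⟩
  set x := (deepLeaves (q + 1) F).max' hne with hx
  set D := depthT F {x} with hDx
  have hD : q + 1 ≤ D := (Finset.mem_filter.1 ((deepLeaves (q + 1) F).max'_mem hne)).2
  choose v hvF hxv hvd using fun m : Fin (q + 2) =>
    hF.exists_superset_depthT_eq (hF.2.1 x) (j := D - (q + 1) + m) (by omega)
  have hxv' (m) : x ∈ v m := hxv m (Finset.mem_singleton_self x)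
  refine ⟨v, fun m m' h => Fin.ext ?_, hvF, fun ℓ => ?_, fun S => ?_⟩
  · have := congrArg (depthT F) h
    rw [hvd, hvd] at this
    omega
  · refine hF.mem_childrenT_of_depthT_eq_succ (hvF _) (hvF _) (hxv' _) (hxv' _) ?_
    rw [hvd, hvd, Fin.val_succ, Fin.val_castSucc]
    omega
  · simp only [spineMid, dif_pos hne, ← hx, ← hDx, Finset.mem_filter, Set.mem_range]
    constructor
    · rintro ⟨hSF, hxS, h1, h2⟩
      refine ⟨⟨depthT F S - (D - q), by omega⟩, ?_⟩
      refine (hF.eq_of_depthT_eq hSF (hvF _) hxS (hxv' _) ?_).symm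
      rw [hvd, Fin.val_succ, Fin.val_castSucc, Fin.val_mk]
      omega
    · rintro ⟨r, rfl⟩
      have := hvd r.castSucc.succ
      rw [Fin.val_succ, Fin.val_castSucc] at this
      exact ⟨hvF _, hxv' _, by omega, by omega⟩

end Laminar

end Trees

section SpineEnergy

variable {k : Type*} [Field k] {n : ℕ} {α : Fin n →₀ ℕ} {F : Finset (Finset (Lbl n α))}

def outdegExcept (F : Finset (Finset (Lbl n α))) (τ : Finset (Lbl n α) → Fin n)
    (S C : Finset (Lbl n α)) : Fin n →₀ ℕ :=
  ∑ C' ∈ (childrenT F S).erase C, Finsupp.single (τ C') 1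

theorem outdeg_eq_outdegExcept_add {τ : Finset (Lbl n α) → Fin n} {S C : Finset (Lbl n α)}
    (hC : C ∈ childrenT F S) :
    outdeg F τ S = outdegExcept F τ S C + Finsupp.single (τ C) 1 :=
  (Finset.sum_erase_add _ _ hC).symm

variable {q : ℕ} {v : Fin (q + 2) → Finset (Lbl n α)}

theorem eq_castSucc_of_mem_childrenT (hF : Laminar F) (hvF : ∀ m, v m ∈ F)
    (hchild : ∀ ℓ : Fin (q + 1), v ℓ.succ ∈ childrenT F (v ℓ.castSucc)) {S : Finset (Lbl n α)}
    (hS : S ∈ F) {r : Fin q} (hr : v r.castSucc.succ ∈ childrenT F S) :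
    S = v r.castSucc.castSucc :=
  hF.eq_of_mem_childrenT hS (hvF _) hr (hchild _)

theorem energy_eq_mul_prod_jacCoeff (Hc : Fin n → (Fin n →₀ ℕ) → k) (hF : Laminar F)
    (hv : Function.Injective v) (hvF : ∀ m, v m ∈ F)
    (hchild : ∀ ℓ : Fin (q + 1), v ℓ.succ ∈ childrenT F (v ℓ.castSucc))
    {τ τ' : Finset (Lbl n α) → Fin n}
    (hτ' : ∀ S ∉ Set.range fun r : Fin q => v r.castSucc.succ, τ' S = τ S) :
    energy Hc F τ' =
      (∏ S ∈ F.filter (fun S => 1 < S.card) \ Finset.univ.image (v ∘ Fin.castSucc),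
        Hc (τ S) (outdeg F τ S)) *
      ∏ ℓ : Fin (q + 1), jacCoeff Hc (outdegExcept F τ (v ℓ.castSucc) (v ℓ.succ))
        (τ' (v ℓ.castSucc)) (τ' (v ℓ.succ)) := by
  classical
  have htop : Finset.univ.image (v ∘ Fin.castSucc) ⊆ F.filter fun S => 1 < S.card := by
    simp only [Finset.subset_iff, Finset.mem_image, Finset.mem_univ, true_and,
      Finset.mem_filter]
    rintro _ ⟨ℓ, rfl⟩
    obtain ⟨-, hsub, -⟩ := Finset.mem_filter.1 (hchild ℓ)
    have := Finset.card_lt_card hsub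
    have := (hF.nonempty_of_mem (hvF ℓ.succ)).card_pos
    exact ⟨hvF _, by simp only [Function.comp_apply]; omega⟩
  rw [energy, ← Finset.prod_sdiff htop,
    Finset.prod_image (g := v ∘ Fin.castSucc) fun _ _ _ _ h => Fin.castSucc_injective _ (hv h)]
  congr 1
  · refine Finset.prod_congr rfl fun S hS => ?_
    obtain ⟨hSI, hStop⟩ := Finset.mem_sdiff.1 hS
    have hSF := (Finset.mem_filter.1 hSI).1
    have hSmid : S ∉ Set.range fun r : Fin q => v r.castSucc.succ := by
      rintro ⟨r, rfl⟩
      exact hStop (Finset.mem_image.2 ⟨r.succ, Finset.mem_univ _, by simp⟩)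
    rw [hτ' S hSmid, outdeg, outdeg]
    refine congrArg _ <| Finset.sum_congr rfl fun C hC => congrArg (Finsupp.single · 1) (hτ' C ?_)
    rintro ⟨r, rfl⟩
    exact hStop (Finset.mem_image.2 ⟨r.castSucc, Finset.mem_univ _,
      (eq_castSucc_of_mem_childrenT hF hvF hchild hSF hC).symm⟩)
  · refine Finset.prod_congr rfl fun ℓ _ => ?_
    rw [Function.comp_apply, outdeg_eq_outdegExcept_add (hchild ℓ), jacCoeff, Matrix.of_apply,
      outdegExcept, outdegExcept]
    congr 2
    refine Finset.sum_congr rfl fun C hC => congrArg (Finsupp.single · 1) (hτ' C ?_)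
    rintro ⟨r, rfl⟩
    have hℓ := hv (eq_castSucc_of_mem_childrenT hF hvF hchild (hvF _)
      (Finset.mem_of_mem_erase hC))
    rw [Fin.castSucc_inj] at hℓ
    exact Finset.ne_of_mem_erase hC (by rw [hℓ])

end SpineEnergy

section ClassSum

variable {k : Type*} [Field k] {n : ℕ} {α : Fin n →₀ ℕ} {F : Finset (Finset (Lbl n α))}
  {q : ℕ}

theorem sum_filter_spineRel_eq_sum_extend {M : Type*} [AddCommMonoid M] {p : ℕ}
    {τ : Finset (Lbl n α) → Fin n} {e : Fin q → Finset (Lbl n α)} (he : Function.Injective e)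
    (hspine : ∀ S, S ∈ spineMid p F ↔ S ∈ Set.range e)
    [DecidablePred (SpineRel p (F, τ))] (f : TreeData n α → M) :
    ∑ T' ∈ Finset.univ.filter (SpineRel p (F, τ)), f T'
      = ∑ g : Fin q → Fin n, f (F, Function.extend e g τ) := by
  have hback {T' : TreeData n α} (hT' : SpineRel p (F, τ) T') :
      (F, Function.extend e (T'.2 ∘ e) τ) = T' := by
    obtain ⟨hF, hτ⟩ := hT'
    refine Prod.ext hF (funext fun S => ?_)
    by_cases hS : ∃ r, e r = S
    · obtain ⟨r, rfl⟩ := hS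
      exact he.extend_apply _ _ r
    · exact (Function.extend_apply' _ _ _ hS).trans (hτ S fun h => hS ((hspine S).1 h))
  refine Finset.sum_nbij' (fun T' => T'.2 ∘ e) (fun g => (F, Function.extend e g τ))
    (fun _ _ => Finset.mem_coe.2 (Finset.mem_univ _)) (fun g _ => ?_)
    (fun T' hT' => hback (Finset.mem_filter.1 hT').2)
    (fun g _ => funext (he.extend_apply g τ)) (fun T' hT' => ?_)
  · refine Finset.mem_coe.2 (Finset.mem_filter.2 ⟨Finset.mem_univ _, rfl, fun S hS => ?_⟩)
    exact (Function.extend_apply' _ _ _ fun ⟨r, hr⟩ => hS ((hspine S).2 ⟨r, hr⟩)).symm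
  · rw [hback (Finset.mem_filter.1 hT').2]

theorem extend_spine_apply {β γ : Type*} {v : Fin (q + 2) → β} (hv : Function.Injective v)
    (g : Fin q → γ) (τ : β → γ) (m : Fin (q + 2)) :
    Function.extend (fun r : Fin q => v r.castSucc.succ) g τ (v m)
      = (Fin.cons (τ (v 0)) (Fin.snoc g (τ (v (Fin.last _)))) : Fin (q + 2) → γ) m := by
  have he : Function.Injective fun r : Fin q => v r.castSucc.succ :=
    hv.comp ((Fin.succ_injective _).comp (Fin.castSucc_injective _))
  induction m using Fin.cases with
  | zero =>
    exact Function.extend_apply' _ _ _ fun ⟨r, hr⟩ => Fin.succ_ne_zero _ (hv hr)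
  | succ m =>
    induction m using Fin.lastCases with
    | last =>
      rw [Fin.cons_succ, Fin.snoc_last, Fin.succ_last]
      exact Function.extend_apply' _ _ _ fun ⟨r, hr⟩ =>
        Fin.castSucc_ne_last _ (Fin.succ_injective _ (hv hr))
    | cast r =>
      rw [Fin.cons_succ, Fin.snoc_castSucc]
      exact he.extend_apply g τ r

theorem sum_energy_extend_eq (Hc : Fin n → (Fin n →₀ ℕ) → k) (hF : Laminar F)
    {v : Fin (q + 2) → Finset (Lbl n α)} (hv : Function.Injective v) (hvF : ∀ m, v m ∈ F)
    (hchild : ∀ ℓ : Fin (q + 1), v ℓ.succ ∈ childrenT F (v ℓ.castSucc))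
    (τ : Finset (Lbl n α) → Fin n) :
    ∑ g : Fin q → Fin n, energy Hc F (Function.extend (fun r => v r.castSucc.succ) g τ) =
      (∏ S ∈ F.filter (fun S => 1 < S.card) \ Finset.univ.image (v ∘ Fin.castSucc),
        Hc (τ S) (outdeg F τ S)) *
      (List.ofFn fun ℓ : Fin (q + 1) =>
        jacCoeff Hc (outdegExcept F τ (v ℓ.castSucc) (v ℓ.succ))).prod
        (τ (v 0)) (τ (v (Fin.last _))) := by
  rw [Matrix.list_prod_ofFn_apply, Finset.mul_sum]
  refine Finset.sum_congr rfl fun g _ => ?_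
  rw [energy_eq_mul_prod_jacCoeff Hc hF hv hvF hchild
    fun S hS => Function.extend_apply' _ _ _ fun ⟨r, hr⟩ => hS ⟨r, hr⟩]
  simp only [extend_spine_apply hv]

end ClassSum

open scoped Classical in
theorem class_energy_sum_vanishes_general
    {k : Type*} [Field k] [CharZero k] {n p : ℕ} (hp : 0 < p)
    (H : Fin n → MvPowerSeries (Fin n) k)
    (hstrong : (List.ofFn fun ℓ : Fin p =>
      Matrix.of (jacBlock (coefSc H) ℓ)).prod = 0)
    (α : Fin n →₀ ℕ) (i : Fin n)
    (T : TreeData n α) (hT : Good i T) (htall : p ≤ heightT T.1) :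
    ∑ T' ∈ Finset.univ.filter (fun T' : TreeData n α => SpineRel p T T'),
      energy (coefSc H) T'.1 T'.2 = 0 := by
  obtain ⟨q, rfl⟩ : ∃ q, p = q + 1 := ⟨p - 1, by omega⟩
  obtain ⟨F, τ⟩ := T
  obtain ⟨v, hv, hvF, hchild, hspine⟩ := hT.1.exists_spine htall
  have he : Function.Injective fun r : Fin q => v r.castSucc.succ :=
    hv.comp ((Fin.succ_injective _).comp (Fin.castSucc_injective _))
  rw [sum_filter_spineRel_eq_sum_extend he hspine fun T' => energy (coefSc H) T'.1 T'.2,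
    sum_energy_extend_eq _ hT.1 hv hvF hchild, list_prod_jacCoeff_eq_zero hstrong,
    Matrix.zero_apply, mul_zero]

open scoped Classical in
/-- If `JH` is strongly nilpotent with index `p`, then for any tree `T ∈ 𝕊_{i,α}` of height
at least `p`, the sum of the energies over the equivalence class of `T` (the trees agreeing
with `T` except for the types of the middle spine vertices `v₁,…,v_{p-1}`) vanishes. -/
theorem class_energy_sum_vanishes
    {k : Type*} [Field k] [CharZero k] {n p : ℕ} (hp : 0 < p)
    (H : Fin n → MvPowerSeries (Fin n) k)
    (hH2 : ∀ i (β : Fin n →₀ ℕ), (β.sum fun _ m => m) < 2 →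
      MvPowerSeries.coeff β (H i) = 0)
    (hstrong : (List.ofFn fun ℓ : Fin p =>
      Matrix.of (jacBlock (coefSc H) ℓ)).prod = 0)
    (α : Fin n →₀ ℕ) (i : Fin n)
    (T : TreeData n α) (hT : Good i T) (htall : p ≤ heightT T.1) :
    ∑ T' ∈ Finset.univ.filter (fun T' : TreeData n α => SpineRel p T T'),
      energy (coefSc H) T'.1 T'.2 = 0 :=
  class_energy_sum_vanishes_general hp H hstrong α i T hT htall
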